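/- Let (a, b, c) be a primitive Pythagorean triple with a odd and b even. Then Δ = c − b is an odd perfect square, Δ divides a², and gcd(Δ, a²/Δ) = 1. -/

import Mathlib

/-! From a² + b² = c² we get a² = (c − b)(c + b). Primitivity makes b and c coprime, so a common
divisor of c − b and c + b divides 2b; as c − b is odd it divides b, hence c, so it is 1. A square
split into two coprime factors has both factors squares. -/

namespace Nat

theorem sq_eq_sub_mul_add_of_sq_add_sq {a b c : ℕ} (h : a ^ 2 + b ^ 2 = c ^ 2) :
    a ^ 2 = (c - b) * (c + b) := by
  rw [mul_comm, ← Nat.sq_sub_sq, ← h, Nat.add_sub_cancel]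

theorem coprime_of_sq_add_sq {a b c : ℕ} (h : a ^ 2 + b ^ 2 = c ^ 2)
    (hprim : gcd a (gcd b c) = 1) : Coprime b c := by
  have hg_sq : gcd b c ^ 2 ∣ a ^ 2 := by
    refine (Nat.dvd_add_left (pow_dvd_pow_of_dvd (gcd_dvd_left b c) 2)).mp ?_
    exact h ▸ pow_dvd_pow_of_dvd (gcd_dvd_right b c) 2
  have hg : gcd b c ∣ a := (Nat.pow_dvd_pow_iff two_ne_zero).mp hg_sq
  exact Nat.eq_one_of_dvd_one (hprim ▸ Nat.dvd_gcd hg dvd_rfl)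

theorem odd_of_sq_add_sq {a b c : ℕ} (h : a ^ 2 + b ^ 2 = c ^ 2) (ha : Odd a) (hb : Even b) :
    Odd c :=
  (odd_pow_iff two_ne_zero).mp (h ▸ ha.pow.add_even (hb.pow_of_ne_zero two_ne_zero))

theorem coprime_sub_add_of_coprime {b c : ℕ} (hbc : Coprime b c) (hodd : Odd (c - b)) :
    Coprime (c - b) (c + b) := by
  obtain ⟨d, rfl⟩ := le_iff_exists_add.mp (Nat.lt_of_sub_pos hodd.pos).le
  rw [Nat.add_sub_cancel_left] at hodd ⊢
  rw [show b + d + b = d + 2 * b by ring, coprime_self_add_right]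
  exact (coprime_two_right.mpr hodd).mul_right (coprime_self_add_left.mp hbc.symm)

end Nat

theorem stmt_6_general (a b c : ℕ)
    (h : a ^ 2 + b ^ 2 = c ^ 2)
    (hprim : Nat.gcd a (Nat.gcd b c) = 1)
    (haodd : Odd a) (hbeven : Even b) :
    Odd (c - b) ∧ (∃ n : ℕ, c - b = n ^ 2) ∧ (c - b) ∣ a ^ 2 ∧
      Nat.gcd (c - b) (a ^ 2 / (c - b)) = 1 := by
  have hbc : b ≤ c := (Nat.pow_le_pow_iff_left two_ne_zero).mp (h ▸ Nat.le_add_left _ _)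
  have hfac := Nat.sq_eq_sub_mul_add_of_sq_add_sq h
  have hodd : Odd (c - b) := Nat.Odd.sub_even hbc (Nat.odd_of_sq_add_sq h haodd hbeven) hbeven
  have hcop : Nat.Coprime (c - b) (c + b) :=
    Nat.coprime_sub_add_of_coprime (Nat.coprime_of_sq_add_sq h hprim) hodd
  have hquot : a ^ 2 / (c - b) = c + b := by rw [hfac, Nat.mul_div_cancel_left _ hodd.pos]
  refine ⟨hodd, ?_, Dvd.intro _ hfac.symm, hquot ▸ hcop⟩
  exact exists_eq_pow_of_mul_eq_pow (Nat.isUnit_iff.mpr hcop) hfac.symm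

theorem stmt_6 (a b c : ℕ) (ha : 0 < a) (hb : 0 < b) (hc : 0 < c)
    (h : a ^ 2 + b ^ 2 = c ^ 2)
    (hprim : Nat.gcd a (Nat.gcd b c) = 1)
    (haodd : Odd a) (hbeven : Even b) :
    Odd (c - b) ∧ (∃ n : ℕ, c - b = n ^ 2) ∧ (c - b) ∣ a ^ 2 ∧
      Nat.gcd (c - b) (a ^ 2 / (c - b)) = 1 :=
  stmt_6_general a b c h hprim haodd hbeven
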